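/- Let ξ and η be independent nonnegative random variables with continuous survival functions S_ξ and S_η satisfying S_η(t) = S_ξ(t)^h for all t ≥ 0, where h > 0 is a constant (proportional hazards). Then P(η > ξ) = 1/(1 + h), and consequently the win ratio κ = P(η > ξ)/P(ξ > η) = 1/h. -/

import Mathlib

/-!
Conditioning on `ξ`, independence gives `P(ξ < η) = E[S_η(ξ)] = E[S_ξ(ξ)^h]`, where `>` and `≥`
may be exchanged because there are no atoms. For an atomless law, `S_ξ(ξ)` is uniformly
distributed on `[0, 1]` (probability integral transform), so the expectation is
`∫₀¹ u^h du = 1/(1+h)`. Since also `S_ξ = S_η^(1/h)`, the same computation gives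
`P(η < ξ) = 1/(1 + 1/h)`, and the win ratio is the quotient of the two.
-/

open MeasureTheory ProbabilityTheory Set

lemma setLIntegral_Ioi_ofReal_one_sub_rpow {p : ℝ} (hp : 0 < p) :
    ∫⁻ t in Ioi 0, ENNReal.ofReal (1 - t ^ p) = ENNReal.ofReal (p / (p + 1)) := by
  have hvanish : ∀ t ∈ Ioi (1 : ℝ), ENNReal.ofReal (1 - t ^ p) = 0 := fun t ht =>
    ENNReal.ofReal_eq_zero.2 (sub_nonpos.2 (Real.one_le_rpow (le_of_lt ht) hp.le))
  have hint : IntervalIntegrable (fun t : ℝ => 1 - t ^ p) volume 0 1 :=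
    intervalIntegrable_const.sub (intervalIntegral.intervalIntegrable_rpow' (by linarith))
  have hvalue : ∫ t in (0 : ℝ)..1, (1 - t ^ p) = p / (p + 1) := by
    rw [intervalIntegral.integral_sub intervalIntegrable_const
      (intervalIntegral.intervalIntegrable_rpow' (by linarith)), integral_rpow (by left; linarith)]
    field_simp
    simp [Real.zero_rpow (by linarith : p + 1 ≠ 0)]
  rw [← Ioc_union_Ioi_eq_Ioi zero_le_one, lintegral_union measurableSet_Ioi Ioc_disjoint_Ioi_same,
    setLIntegral_congr_fun measurableSet_Ioi hvanish, lintegral_zero, add_zero,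
    ← ofReal_integral_eq_lintegral_ofReal hint.1, ← intervalIntegral.integral_of_le zero_le_one,
    hvalue]
  refine (ae_restrict_iff' measurableSet_Ioc).2 (ae_of_all _ fun t ht => ?_)
  exact sub_nonneg.2 (Real.rpow_le_one ht.1.le ht.2 hp.le)

namespace ProbabilityTheory

section Atomless

variable (μ : Measure ℝ) [IsProbabilityMeasure μ] [NullSingletonClass μ]

lemma continuous_cdf : Continuous (cdf μ) := by
  refine continuous_iff_continuousAt.2 fun x => ?_
  rw [(monotone_cdf μ).continuousAt_iff_leftLim_eq_rightLim, StieltjesFunction.rightLim_eq]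
  have hjump : ENNReal.ofReal (cdf μ x - Function.leftLim (cdf μ) x) = 0 := by
    rw [← StieltjesFunction.measure_singleton, measure_cdf, measure_singleton]
  have := (monotone_cdf μ).leftLim_le (le_refl x)
  rw [ENNReal.ofReal_eq_zero] at hjump
  linarith

lemma measure_Ici_toReal_eq_one_sub_cdf (x : ℝ) : (μ (Ici x)).toReal = 1 - cdf μ x := by
  rw [← measure_congr Ioi_ae_eq_Ici, ← compl_Iic, prob_compl_eq_one_sub measurableSet_Iic,
    ENNReal.toReal_sub_of_le prob_le_one ENNReal.one_ne_top, cdf_eq_real]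
  rfl

lemma measure_setOf_cdf_lt {v : ℝ} (hv : v < 1) :
    μ {x | cdf μ x < v} = ENNReal.ofReal v := by
  rcases le_or_gt v 0 with hv0 | hv0
  · rw [ENNReal.ofReal_of_nonpos hv0, ← measure_empty (μ := μ)]
    congr 1
    exact eq_empty_of_forall_notMem fun x hx => (hv0.trans (cdf_nonneg μ x)).not_gt hx
  set A := {x | cdf μ x < v}
  have hlower : ∀ ⦃x y⦄, y ≤ x → x ∈ A → y ∈ A := fun x y hyx hx =>
    (monotone_cdf μ hyx).trans_lt hx
  have hne : A.Nonempty := ((tendsto_cdf_atBot μ).eventually (gt_mem_nhds hv0)).exists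
  obtain ⟨b, hb⟩ := ((tendsto_cdf_atTop μ).eventually (lt_mem_nhds hv)).exists
  have hbdd : BddAbove A := ⟨b, fun x hx => le_of_not_gt fun hbx => hx.not_gt
    (hb.trans_le (monotone_cdf μ hbx.le))⟩
  set c := sSup A
  have hIio : Iio c ⊆ A := fun x hx =>
    let ⟨a, ha, hxa⟩ := exists_lt_of_lt_csSup hne hx
    hlower hxa.le ha
  have hIic : A ⊆ Iic c := fun x hx => le_csSup hbdd hx
  have hcv : cdf μ c = v := by
    refine le_antisymm ?_ ?_
    · exact closure_minimal (fun x (hx : x ∈ A) => hx.le)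
        (isClosed_le (continuous_cdf μ) continuous_const) (csSup_mem_closure hne hbdd)
    · refine closure_minimal (fun x (hx : c < x) => ?_)
        (isClosed_le continuous_const (continuous_cdf μ)) (closure_Ioi c ▸ self_mem_Ici)
      exact show v ≤ cdf μ x from le_of_not_gt fun hxA => (hIic hxA).not_gt hx
  have hc : μ (Iic c) = ENNReal.ofReal v := by rw [← ofReal_cdf, hcv]
  refine le_antisymm (hc ▸ measure_mono hIic) ?_
  rw [← hc, ← measure_congr Iio_ae_eq_Iic]
  exact measure_mono hIio

lemma lintegral_one_sub_cdf_rpow {h : ℝ} (hh : 0 < h) :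
    ∫⁻ x, ENNReal.ofReal ((1 - cdf μ x) ^ h) ∂μ = ENNReal.ofReal (1 / (1 + h)) := by
  have hF : ∀ x, 0 ≤ 1 - cdf μ x := fun x => sub_nonneg.2 (cdf_le_one μ x)
  have hlevel : ∀ t ∈ Ioi (0 : ℝ),
      μ {x | t < (1 - cdf μ x) ^ h} = ENNReal.ofReal (1 - t ^ h⁻¹) := fun t ht => by
    have hset : {x | t < (1 - cdf μ x) ^ h} = {x | cdf μ x < 1 - t ^ h⁻¹} := by
      ext x
      simp only [mem_ofPred_eq, ← Real.rpow_inv_lt_iff_of_pos (le_of_lt ht) (hF x) hh]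
      constructor <;> intro <;> linarith
    rw [hset, measure_setOf_cdf_lt μ (sub_lt_self 1 (Real.rpow_pos_of_pos ht _))]
  rw [lintegral_eq_lintegral_meas_lt μ (ae_of_all _ fun x => Real.rpow_nonneg (hF x) h)
      ((continuous_const.sub (continuous_cdf μ)).rpow_const fun x => Or.inr hh.le).aemeasurable,
    setLIntegral_congr_fun measurableSet_Ioi hlevel,
    setLIntegral_Ioi_ofReal_one_sub_rpow (inv_pos.2 hh)]
  congr 1
  field_simp

lemma prod_setOf_fst_lt_snd_of_survival_eq_rpow (ν : Measure ℝ) [IsFiniteMeasure ν]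
    [NullSingletonClass ν] {h : ℝ} (hh : 0 < h)
    (hS : ∀ᵐ x ∂μ, (ν (Ici x)).toReal = (μ (Ici x)).toReal ^ h) :
    (μ.prod ν) {p | p.1 < p.2} = ENNReal.ofReal (1 / (1 + h)) := by
  rw [Measure.prod_apply (measurableSet_lt measurable_fst measurable_snd),
    ← lintegral_one_sub_cdf_rpow μ hh]
  refine lintegral_congr_ae (hS.mono fun x hx => ?_)
  change ν (Ioi x) = ENNReal.ofReal ((1 - cdf μ x) ^ h)
  rw [← measure_Ici_toReal_eq_one_sub_cdf, ← hx, ENNReal.ofReal_toReal (measure_ne_top ν _),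
    measure_congr (Ioi_ae_eq_Ici (μ := ν))]

end Atomless

variable {Ω : Type*} [MeasurableSpace Ω] {P : Measure Ω} {X Y : Ω → ℝ}

lemma IndepFun.measure_lt_eq_prod_map [IsFiniteMeasure P] (hX : Measurable X)
    (hY : Measurable Y) (hind : IndepFun X Y P) :
    P {ω | X ω < Y ω} = ((P.map X).prod (P.map Y)) {p | p.1 < p.2} := by
  rw [← (indepFun_iff_map_prod_eq_prod_map_map hX.aemeasurable hY.aemeasurable).1 hind,
    Measure.map_apply (hX.prodMk hY) (measurableSet_lt measurable_fst measurable_snd)]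
  rfl

lemma IndepFun.measure_lt_eq_of_survival_eq_rpow [IsProbabilityMeasure P] (hX : Measurable X)
    (hY : Measurable Y) (hind : IndepFun X Y P) (hX0 : ∀ᵐ ω ∂P, 0 ≤ X ω)
    (hatomX : ∀ x, P {ω | X ω = x} = 0) (hatomY : ∀ x, P {ω | Y ω = x} = 0)
    {h : ℝ} (hh : 0 < h)
    (hS : ∀ t, 0 ≤ t → (P {ω | Y ω ≥ t}).toReal = (P {ω | X ω ≥ t}).toReal ^ h) :
    P {ω | X ω < Y ω} = ENNReal.ofReal (1 / (1 + h)) := by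
  have : IsProbabilityMeasure (P.map X) := Measure.isProbabilityMeasure_map hX.aemeasurable
  have : NullSingletonClass (P.map X) :=
    ⟨fun x => (Measure.map_apply hX (measurableSet_singleton x)).trans (hatomX x)⟩
  have : NullSingletonClass (P.map Y) :=
    ⟨fun x => (Measure.map_apply hY (measurableSet_singleton x)).trans (hatomY x)⟩
  refine (hind.measure_lt_eq_prod_map hX hY).trans
    (prod_setOf_fst_lt_snd_of_survival_eq_rpow _ _ hh ?_)
  refine ((ae_map_iff hX.aemeasurable measurableSet_Ici).2 hX0).mono fun t ht => ?_
  rw [Measure.map_apply hX measurableSet_Ici, Measure.map_apply hY measurableSet_Ici]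
  exact hS t ht

end ProbabilityTheory

/-- Proportional hazards: if ξ, η are independent nonnegative random variables with
atomless distributions and survival functions satisfying S_η(t) = S_ξ(t)^h for all
t ≥ 0 with h > 0, then P(η > ξ) = 1/(1 + h) and the win ratio
P(η > ξ)/P(ξ > η) = 1/h. -/
theorem stmt10 {Ω : Type*} [MeasureSpace Ω] [IsProbabilityMeasure (ℙ : Measure Ω)]
    (ξ η : Ω → ℝ) (hmξ : Measurable ξ) (hmη : Measurable η)
    (hξ0 : ∀ ω, 0 ≤ ξ ω) (hη0 : ∀ ω, 0 ≤ η ω)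
    (h : ℝ) (hh : 0 < h)
    (hind : IndepFun ξ η ℙ)
    (hatomξ : ∀ x : ℝ, ℙ {ω | ξ ω = x} = 0)
    (hatomη : ∀ x : ℝ, ℙ {ω | η ω = x} = 0)
    (hprop : ∀ t : ℝ, 0 ≤ t →
      (ℙ {ω | η ω ≥ t}).toReal = (ℙ {ω | ξ ω ≥ t}).toReal ^ h) :
    (ℙ {ω | η ω > ξ ω}).toReal = 1 / (1 + h) ∧
    (ℙ {ω | η ω > ξ ω}).toReal / (ℙ {ω | ξ ω > η ω}).toReal = 1 / h := by
  have hηξ := hind.measure_lt_eq_of_survival_eq_rpow hmξ hmη (ae_of_all _ hξ0) hatomξ hatomη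
    hh hprop
  have hξη := hind.symm.measure_lt_eq_of_survival_eq_rpow hmη hmξ (ae_of_all _ hη0) hatomη
    hatomξ (inv_pos.2 hh) fun t ht => by
      rw [hprop t ht, Real.rpow_rpow_inv ENNReal.toReal_nonneg hh.ne']
  rw [hηξ, hξη, ENNReal.toReal_ofReal (by positivity),
    ENNReal.toReal_ofReal (by positivity)]
  refine ⟨rfl, ?_⟩
  field_simp
  ring
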